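/- Let D₊, D₋, β₊, β₋ > 0 and V > 0 be positive reals. Define, for nonzero integers m, φ_m := -V·m²·( tanh(D₊·m)/(β₊·D₊·m) + tanh(D₋·m)/(β₋·D₋·m) )⁻¹. Then there exists C ≥ 1 with C⁻¹·|m|³ ≤ -φ_m ≤ C·|m|³ for all nonzero integers m. -/
import Mathlib

private lemma tanh_pos' {x : ℝ} (hx : 0 < x) : 0 < Real.tanh x := by
  rw [Real.tanh_eq_sinh_div_cosh]
  exact div_pos (Real.sinh_pos_iff.2 hx) (Real.cosh_pos x)

private lemma tanh_lt_one' (x : ℝ) : Real.tanh x < 1 := by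
  rw [Real.tanh_eq_sinh_div_cosh]
  exact (div_lt_one (Real.cosh_pos x)).2 (Real.sinh_lt_cosh x)

private lemma tanh_mono' {a b : ℝ} (hab : a ≤ b) : Real.tanh a ≤ Real.tanh b := by
  rw [Real.tanh_eq_sinh_div_cosh, Real.tanh_eq_sinh_div_cosh,
    div_le_div_iff₀ (Real.cosh_pos a) (Real.cosh_pos b)]
  have h : Real.sinh (a - b) ≤ 0 := by
    have := Real.sinh_le_sinh.2 (sub_nonpos.2 hab)
    simpa using this
  rw [Real.sinh_sub] at h
  linarith

/-- For D, β > 0 and x ≥ 1: tanh(D)/(β·D)·x⁻¹ ≤ tanh(D·x)/(β·(D·x)) ≤ 1/(β·D)·x⁻¹. -/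
private lemma term_bounds {D β x : ℝ} (hD : 0 < D) (hβ : 0 < β) (hx : 1 ≤ x) :
    Real.tanh D / (β * D) * x⁻¹ ≤ Real.tanh (D * x) / (β * (D * x)) ∧
    Real.tanh (D * x) / (β * (D * x)) ≤ 1 / (β * D) * x⁻¹ := by
  have hx0 : 0 < x := lt_of_lt_of_le one_pos hx
  have hβD : 0 < β * D := mul_pos hβ hD
  have hDx : 0 < D * x := mul_pos hD hx0
  have hden : β * (D * x) = β * D * x := by ring
  constructor
  · have h1 : Real.tanh D ≤ Real.tanh (D * x) := tanh_mono' (le_mul_of_one_le_right hD.le hx)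
    calc Real.tanh D / (β * D) * x⁻¹ = Real.tanh D / (β * (D * x)) := by
          rw [div_eq_mul_inv, div_eq_mul_inv, mul_inv, mul_inv, mul_inv]
          ring
      _ ≤ Real.tanh (D * x) / (β * (D * x)) := div_le_div_of_nonneg_right h1 (by positivity)
  · have h2 : Real.tanh (D * x) ≤ 1 := (tanh_lt_one' _).le
    calc Real.tanh (D * x) / (β * (D * x)) ≤ 1 / (β * (D * x)) :=
          div_le_div_of_nonneg_right h2 (by positivity)
      _ = 1 / (β * D) * x⁻¹ := by
          rw [div_eq_mul_inv, div_eq_mul_inv, mul_inv, mul_inv, mul_inv]; ring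

/-- cubic two-sided bounds for the surface tension symbol
φ_m = -V·m²·(tanh(D₊m)/(β₊D₊m) + tanh(D₋m)/(β₋D₋m))⁻¹. -/
theorem stmt_18 (Dp Dn βp βn V : ℝ) (hDp : 0 < Dp) (hDn : 0 < Dn)
    (hβp : 0 < βp) (hβn : 0 < βn) (hV : 0 < V) :
    ∃ C : ℝ, 1 ≤ C ∧ ∀ m : ℤ, m ≠ 0 →
      C⁻¹ * |(m : ℝ)| ^ 3 ≤
        -(-V * (m : ℝ) ^ 2 *
          (Real.tanh (Dp * (m : ℝ)) / (βp * (Dp * (m : ℝ)))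
            + Real.tanh (Dn * (m : ℝ)) / (βn * (Dn * (m : ℝ))))⁻¹) ∧
      -(-V * (m : ℝ) ^ 2 *
          (Real.tanh (Dp * (m : ℝ)) / (βp * (Dp * (m : ℝ)))
            + Real.tanh (Dn * (m : ℝ)) / (βn * (Dn * (m : ℝ))))⁻¹) ≤ C * |(m : ℝ)| ^ 3 := by
  set a : ℝ := Real.tanh Dp / (βp * Dp) + Real.tanh Dn / (βn * Dn) with ha_def
  set b : ℝ := 1 / (βp * Dp) + 1 / (βn * Dn) with hb_def
  have ha : 0 < a := by
    have := tanh_pos' hDp; have := tanh_pos' hDn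
    positivity
  have hb : 0 < b := by positivity
  refine ⟨max 1 (max (b / V) (V / a)), le_max_left _ _, ?_⟩
  intro m hm
  set C : ℝ := max 1 (max (b / V) (V / a)) with hC_def
  have hC1 : (1 : ℝ) ≤ C := le_max_left _ _
  have hCb : b / V ≤ C := le_trans (le_max_left _ _) (le_max_right _ _)
  have hCa : V / a ≤ C := le_trans (le_max_right _ _) (le_max_right _ _)
  have hC0 : 0 < C := lt_of_lt_of_le one_pos hC1
  set x : ℝ := |(m : ℝ)| with hx_def
  have hx1 : 1 ≤ x := by
    rw [hx_def]
    exact_mod_cast Int.one_le_abs hm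
  have hx0 : 0 < x := lt_of_lt_of_le one_pos hx1
  -- the terms are even in m: replace m by x
  have key : ∀ D : ℝ, 0 < D → ∀ β : ℝ,
      Real.tanh (D * (m : ℝ)) / (β * (D * (m : ℝ))) = Real.tanh (D * x) / (β * (D * x)) := by
    intro D hD β
    rcases abs_cases (m : ℝ) with ⟨h, _⟩ | ⟨h, _⟩
    · rw [hx_def, h]
    · rw [hx_def, h, mul_neg, Real.tanh_neg, mul_neg, neg_div_neg_eq]
  rw [key Dp hDp βp, key Dn hDn βn]
  set S : ℝ := Real.tanh (Dp * x) / (βp * (Dp * x)) + Real.tanh (Dn * x) / (βn * (Dn * x))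
    with hS_def
  obtain ⟨hp1, hp2⟩ := term_bounds hDp hβp hx1
  obtain ⟨hn1, hn2⟩ := term_bounds hDn hβn hx1
  have hSlow : a * x⁻¹ ≤ S := by rw [ha_def, add_mul]; exact add_le_add hp1 hn1
  have hShigh : S ≤ b * x⁻¹ := by rw [hb_def, add_mul]; exact add_le_add hp2 hn2
  have hS0 : 0 < S := lt_of_lt_of_le (by positivity) hSlow
  have hm2 : (m : ℝ) ^ 2 = x ^ 2 := (sq_abs _).symm
  have hφ : -(-V * (m : ℝ) ^ 2 * S⁻¹) = V * x ^ 2 / S := by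
    rw [hm2]; field_simp
  rw [hφ]
  have hCinv : C⁻¹ ≤ V / b := by
    have h1 : (b / V)⁻¹ ≤ V / b := by rw [inv_div]
    exact le_trans (inv_anti₀ (by positivity) hCb) h1
  have hCup : V / a ≤ C := hCa
  constructor
  · -- lower bound: C⁻¹ x³ ≤ V x³/b ≤ V x² / S
    have h1 : V * x ^ 3 / b ≤ V * x ^ 2 / S := by
      rw [div_le_div_iff₀ hb hS0]
      calc V * x ^ 3 * S ≤ V * x ^ 3 * (b * x⁻¹) :=
            mul_le_mul_of_nonneg_left hShigh (by positivity)
        _ = V * x ^ 2 * b := by field_simp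
    refine le_trans ?_ h1
    have : C⁻¹ * x ^ 3 ≤ V / b * x ^ 3 := mul_le_mul_of_nonneg_right hCinv (by positivity)
    calc C⁻¹ * x ^ 3 ≤ V / b * x ^ 3 := this
      _ = V * x ^ 3 / b := by ring
  · -- upper bound: V x² / S ≤ V x³/a ≤ C x³
    have h1 : V * x ^ 2 / S ≤ V * x ^ 3 / a := by
      rw [div_le_div_iff₀ hS0 ha]
      calc V * x ^ 2 * a = V * x ^ 3 * (a * x⁻¹) := by field_simp
        _ ≤ V * x ^ 3 * S := mul_le_mul_of_nonneg_left hSlow (by positivity)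
    refine le_trans h1 ?_
    calc V * x ^ 3 / a = V / a * x ^ 3 := by ring
      _ ≤ C * x ^ 3 := mul_le_mul_of_nonneg_right hCup (by positivity)
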